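/- Let N : Ω → ℝⁿ be a C¹ unitary vector field with symmetric Jacobian on an open set Ω ⊂ ℝⁿ, and let U = Σⱼ Uⱼ eʲ be a C¹ vector field on Ω. Write U⁰ⱼ = Uⱼ − ⟨N,U⟩Nⱼ (j ≤ n) and U⁰ₙ₊₁ = ⟨N,U⟩. Then the classical divergence satisfies Σⱼ₌₁ⁿ ∂ⱼUⱼ = Σⱼ₌₁ⁿ 𝒟ⱼU⁰ⱼ + ∂_N U⁰ₙ₊₁ + ℋ⁰ ⟨N,U⟩, where ℋ⁰ := Σⱼ₌₁ⁿ ∂ⱼNⱼ and 𝒟ⱼ := ∂ⱼ − Nⱼ∂_N. -/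

import Mathlib

/-- The extended Günter derivative `𝒟ⱼφ = ∂ⱼφ − Nⱼ ∂_N φ` as a function. -/
noncomputable def gunterD (n : ℕ)
    (N : EuclideanSpace ℝ (Fin n) → EuclideanSpace ℝ (Fin n)) (j : Fin n)
    (φ : EuclideanSpace ℝ (Fin n) → ℝ) : EuclideanSpace ℝ (Fin n) → ℝ :=
  fun x => fderiv ℝ φ x (EuclideanSpace.single j 1)
    - N x j * ∑ m : Fin n, N x m * fderiv ℝ φ x (EuclideanSpace.single m 1)

/-- The normal derivative `∂_N φ = Σₘ Nₘ ∂ₘφ` as a function. -/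
noncomputable def normalD (n : ℕ)
    (N : EuclideanSpace ℝ (Fin n) → EuclideanSpace ℝ (Fin n))
    (φ : EuclideanSpace ℝ (Fin n) → ℝ) : EuclideanSpace ℝ (Fin n) → ℝ :=
  fun x => ∑ m : Fin n, N x m * fderiv ℝ φ x (EuclideanSpace.single m 1)

/-!
Split `U = T + ⟨N,U⟩ N` with `T = (U⁰ⱼ)ⱼ` tangent to `N`. The product rule gives
`div U = div T + ∂_N ⟨N,U⟩ + ⟨N,U⟩ div N`, while `Σⱼ 𝒟ⱼ Tⱼ = div T - ⟨N, DT N⟩`. The last term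
vanishes: differentiating `⟨N,T⟩ ≡ 0` along `N` gives `⟨N, DT N⟩ = -⟨DN N, T⟩ = -⟨N, DN T⟩` by the
symmetry of `DN`, and `⟨N, DN v⟩ = 0` for every `v` because `|N| ≡ 1`.
-/

open scoped InnerProductSpace

namespace EuclideanSpace

variable {ι : Type*} [Fintype ι]

theorem sum_mul_eq_inner (v w : EuclideanSpace ℝ ι) : ∑ m, v m * w m = ⟪v, w⟫_ℝ := by
  simp [PiLp.inner_apply, mul_comm]

variable [DecidableEq ι]

theorem sum_mul_apply_single (L : EuclideanSpace ℝ ι →L[ℝ] ℝ) (a : EuclideanSpace ℝ ι) :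
    ∑ m, a m * L (single m 1) = L a := by
  conv_rhs => rw [← (basisFun ι ℝ).sum_repr a]
  simp [map_sum, basisFun_repr]

theorem sum_mul_apply_single_apply (L : EuclideanSpace ℝ ι →L[ℝ] EuclideanSpace ℝ ι)
    (a : EuclideanSpace ℝ ι) (j : ι) : ∑ m, a m * L (single m 1) j = L a j :=
  sum_mul_apply_single ((proj j).comp L) a

theorem isSymmetric_of_apply_single_apply (L : EuclideanSpace ℝ ι →ₗ[ℝ] EuclideanSpace ℝ ι)
    (hL : ∀ j k, L (single j 1) k = L (single k 1) j) : L.IsSymmetric := by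
  intro v w
  have := LinearMap.ext_basis (basisFun ι ℝ).toBasis (basisFun ι ℝ).toBasis
    (B := (innerₛₗ ℝ).compl₁₂ L LinearMap.id) (B' := (innerₛₗ ℝ).compl₁₂ LinearMap.id L)
    (fun j k => by
      change ⟪L _, _⟫_ℝ = ⟪_, L _⟫_ℝ
      simp [inner_single_right, inner_single_left, hL])
  exact congrArg (fun B => B v w) this

end EuclideanSpace

open EuclideanSpace

section Divergence

variable {ι : Type*} [Fintype ι] [DecidableEq ι]

noncomputable def divergence (V : EuclideanSpace ℝ ι → EuclideanSpace ℝ ι)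
    (x : EuclideanSpace ℝ ι) : ℝ :=
  ∑ j, fderiv ℝ V x (single j 1) j

omit [DecidableEq ι] in
theorem fderiv_apply_coord {E : Type*} [NormedAddCommGroup E] [NormedSpace ℝ E]
    {F : E → EuclideanSpace ℝ ι} {x : E} (hF : DifferentiableAt ℝ F x) (j : ι) (v : E) :
    fderiv ℝ (fun y => F y j) x v = fderiv ℝ F x v j :=
  DFunLike.congr_fun ((proj (𝕜 := ℝ) j).hasFDerivAt.comp x hF.hasFDerivAt).fderiv v

theorem divergence_add {V W : EuclideanSpace ℝ ι → EuclideanSpace ℝ ι} {x : EuclideanSpace ℝ ι}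
    (hV : DifferentiableAt ℝ V x) (hW : DifferentiableAt ℝ W x) :
    divergence (V + W) x = divergence V x + divergence W x := by
  simp [divergence, fderiv_add hV hW, Finset.sum_add_distrib]

theorem divergence_smul {f : EuclideanSpace ℝ ι → ℝ} {V : EuclideanSpace ℝ ι → EuclideanSpace ℝ ι}
    {x : EuclideanSpace ℝ ι} (hf : DifferentiableAt ℝ f x) (hV : DifferentiableAt ℝ V x) :
    divergence (f • V) x = fderiv ℝ f x (V x) + f x * divergence V x := by
  simp only [divergence, fderiv_smul hf hV]
  simp [Finset.sum_add_distrib, Finset.mul_sum, mul_comm, sum_mul_apply_single, add_comm]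

end Divergence

section UnitField

variable {E : Type*} [NormedAddCommGroup E] [InnerProductSpace ℝ E]
  {G : Type*} [NormedAddCommGroup G] [NormedSpace ℝ G]

theorem inner_fderiv_add_inner_fderiv_eq_zero {f g : G → E} {x : G} {c : ℝ}
    (hf : DifferentiableAt ℝ f x) (hg : DifferentiableAt ℝ g x)
    (hc : (fun y => ⟪f y, g y⟫_ℝ) =ᶠ[nhds x] fun _ => c) (v : G) :
    ⟪fderiv ℝ f x v, g x⟫_ℝ + ⟪f x, fderiv ℝ g x v⟫_ℝ = 0 := by
  have h := (hf.hasFDerivAt.inner ℝ hg.hasFDerivAt).fderiv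
  rw [hc.fderiv_eq, fderiv_const_apply] at h
  simpa [fderivInnerCLM_apply, add_comm] using (DFunLike.congr_fun h v).symm

theorem inner_fderiv_eq_zero_of_norm_eq_one {N : G → E} {x : G} (hN : DifferentiableAt ℝ N x)
    (hunit : ∀ᶠ y in nhds x, ‖N y‖ = 1) (v : G) : ⟪N x, fderiv ℝ N x v⟫_ℝ = 0 := by
  have h := inner_fderiv_add_inner_fderiv_eq_zero hN hN (c := 1)
    (hunit.mono fun y hy => by simp [hy]) v
  rw [real_inner_comm] at h
  linarith

theorem inner_fderiv_tangent_eq_zero {N T : E → E} {x : E}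
    (hN : DifferentiableAt ℝ N x) (hT : DifferentiableAt ℝ T x)
    (hunit : ∀ᶠ y in nhds x, ‖N y‖ = 1) (hsym : (fderiv ℝ N x : E →ₗ[ℝ] E).IsSymmetric)
    (htan : ∀ᶠ y in nhds x, ⟪N y, T y⟫_ℝ = 0) :
    ⟪N x, fderiv ℝ T x (N x)⟫_ℝ = 0 := by
  have hderiv := inner_fderiv_add_inner_fderiv_eq_zero hN hT htan (N x)
  have hDN : ⟪fderiv ℝ N x (N x), T x⟫_ℝ = 0 := by
    rw [show ⟪fderiv ℝ N x (N x), T x⟫_ℝ = ⟪N x, fderiv ℝ N x (T x)⟫_ℝ from hsym _ _]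
    exact inner_fderiv_eq_zero_of_norm_eq_one hN hunit _
  linarith

end UnitField

theorem normalD_eq {n : ℕ} (N : EuclideanSpace ℝ (Fin n) → EuclideanSpace ℝ (Fin n))
    (φ : EuclideanSpace ℝ (Fin n) → ℝ) (x : EuclideanSpace ℝ (Fin n)) :
    normalD n N φ x = fderiv ℝ φ x (N x) :=
  sum_mul_apply_single _ _

theorem sum_gunterD_eq_divergence_sub {n : ℕ}
    (N V : EuclideanSpace ℝ (Fin n) → EuclideanSpace ℝ (Fin n)) {x : EuclideanSpace ℝ (Fin n)} (hV : DifferentiableAt ℝ V x) :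
    ∑ j, gunterD n N j (fun y => V y j) x = divergence V x - ⟪N x, fderiv ℝ V x (N x)⟫_ℝ := by
  simp only [gunterD, fderiv_apply_coord hV, sum_mul_apply_single_apply, Finset.sum_sub_distrib,
    sum_mul_eq_inner]
  rfl

theorem divergence_in_extended_coordinates_general
    (n : ℕ) (Ω : Set (EuclideanSpace ℝ (Fin n))) (hΩ : IsOpen Ω)
    (N U : EuclideanSpace ℝ (Fin n) → EuclideanSpace ℝ (Fin n))
    (hdiffN : ∀ x ∈ Ω, DifferentiableAt ℝ N x)
    (hdiffU : ∀ x ∈ Ω, DifferentiableAt ℝ U x)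
    (hunit : ∀ x ∈ Ω, ‖N x‖ = 1)
    (hsym : ∀ x ∈ Ω, ∀ j k : Fin n,
      fderiv ℝ N x (EuclideanSpace.single j 1) k = fderiv ℝ N x (EuclideanSpace.single k 1) j) :
    ∀ x ∈ Ω,
      ∑ j : Fin n, fderiv ℝ U x (EuclideanSpace.single j 1) j
        = (∑ j : Fin n,
            gunterD n N j (fun y => U y j - (∑ m : Fin n, N y m * U y m) * N y j) x)
          + normalD n N (fun y => ∑ m : Fin n, N y m * U y m) x
          + (∑ j : Fin n, fderiv ℝ N x (EuclideanSpace.single j 1) j)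
            * (∑ m : Fin n, N x m * U x m) := by
  intro x hx
  set F := fun y => ⟪N y, U y⟫_ℝ
  set T := U - F • N
  have hΩx : Ω ∈ nhds x := hΩ.mem_nhds hx
  have hN := hdiffN x hx
  have hF : DifferentiableAt ℝ F x := hN.inner ℝ (hdiffU x hx)
  have hT : DifferentiableAt ℝ T x := (hdiffU x hx).sub (hF.smul hN)
  have htan : ∀ᶠ y in nhds x, ⟪N y, T y⟫_ℝ = 0 := by
    filter_upwards [hΩx] with y hy
    simp [T, F, inner_sub_right, inner_smul_right, hunit y hy]
  have hnormal : ⟪N x, fderiv ℝ T x (N x)⟫_ℝ = 0 :=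
    inner_fderiv_tangent_eq_zero hN hT (Filter.eventually_of_mem hΩx hunit)
      (isSymmetric_of_apply_single_apply _ (hsym x hx)) htan
  have hsplit : divergence U x = divergence T x + (fderiv ℝ F x (N x) + F x * divergence N x) := by
    rw [← divergence_smul hF hN, ← divergence_add hT (hF.smul hN), sub_add_cancel]
  simp only [sum_mul_eq_inner]
  change divergence U x = ∑ j, gunterD n N j (fun y => T y j) x + normalD n N F x
    + divergence N x * F x
  rw [hsplit, sum_gunterD_eq_divergence_sub N T hT, normalD_eq, hnormal]
  ring

/-- the classical divergence written in the extended coordinates: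
`Σⱼ ∂ⱼUⱼ = Σⱼ 𝒟ⱼU⁰ⱼ + ∂_N U⁰ₙ₊₁ + ℋ⁰ ⟨N,U⟩` with `ℋ⁰ = Σⱼ ∂ⱼNⱼ`. -/
theorem divergence_in_extended_coordinates
    (n : ℕ) (Ω : Set (EuclideanSpace ℝ (Fin n))) (hΩ : IsOpen Ω)
    (N U : EuclideanSpace ℝ (Fin n) → EuclideanSpace ℝ (Fin n))
    (hNC1 : ContDiffOn ℝ 1 N Ω) (hUC1 : ContDiffOn ℝ 1 U Ω)
    (hdiffN : ∀ x ∈ Ω, DifferentiableAt ℝ N x)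
    (hdiffU : ∀ x ∈ Ω, DifferentiableAt ℝ U x)
    (hunit : ∀ x ∈ Ω, ‖N x‖ = 1)
    (hsym : ∀ x ∈ Ω, ∀ j k : Fin n,
      fderiv ℝ N x (EuclideanSpace.single j 1) k = fderiv ℝ N x (EuclideanSpace.single k 1) j) :
    ∀ x ∈ Ω,
      ∑ j : Fin n, fderiv ℝ U x (EuclideanSpace.single j 1) j
        = (∑ j : Fin n,
            gunterD n N j (fun y => U y j - (∑ m : Fin n, N y m * U y m) * N y j) x)
          + normalD n N (fun y => ∑ m : Fin n, N y m * U y m) x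
          + (∑ j : Fin n, fderiv ℝ N x (EuclideanSpace.single j 1) j)
            * (∑ m : Fin n, N x m * U x m) :=
  divergence_in_extended_coordinates_general n Ω hΩ N U hdiffN hdiffU hunit hsym
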